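/- Let E be a constant real 3×3 matrix satisfying E_min|X|² ≤ XᵀEX for all X ∈ ℝ³ with some E_min > 0, let α, β, ε > 0, and let f : ℝ³ → ℝ be a square-integrable continuous function. Suppose φ_t, φ_c : ℝ³ → ℝ are twice continuously differentiable with compact support and satisfy on ℝ³: −∇·(E∇φ_t) + (α²/ε²)(φ_t − φ_c) = −(α²/ε²) f and −∇·(E∇φ_c) − (β²/ε²)(φ_t − φ_c) = (β²/ε²) f. Then β² E_min ∫_{ℝ³} |∇φ_t|² dx + α² E_min ∫_{ℝ³} |∇φ_c|² dx ≤ (α² β²/ε²) ‖f‖²_{L²(ℝ³)}. -/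

import Mathlib

open Matrix MeasureTheory

/-- Partial derivative `∂_i u` of a function `u : ℝ³ → ℝ`. -/
noncomputable def pd3 (u : (Fin 3 → ℝ) → ℝ) (i : Fin 3) (x : Fin 3 → ℝ) : ℝ :=
  fderiv ℝ u x (Pi.single i 1)

/-- The operator `∇·(E∇u) = ∑_{i,j} E i j * ∂_i ∂_j u` for a constant matrix `E`. -/
noncomputable def divEgrad (E : Matrix (Fin 3) (Fin 3) ℝ) (u : (Fin 3 → ℝ) → ℝ)
    (x : Fin 3 → ℝ) : ℝ :=
  ∑ i, ∑ j, E i j * pd3 (pd3 u j) i x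

/-!
Test the first equation against `β² φ_t` and the second against `α² φ_c` and add. With
`g = φ_t - φ_c` and `c = α²β²/ε²`, the zeroth-order terms combine pointwise into `c g (g + f)`, and
`-g (g + f) ≤ f² / 4`. Integrating by parts turns the second-order terms into the quadratic forms
`∫ ∇φᵀ E ∇φ`, which dominate `E_min ∫ |∇φ|²` by coercivity.
-/

noncomputable def grad3 (u : (Fin 3 → ℝ) → ℝ) (x : Fin 3 → ℝ) : Fin 3 → ℝ :=
  fun i => pd3 u i x

section Regularity

variable {u : (Fin 3 → ℝ) → ℝ}

lemma continuous_pd3 (hu : ContDiff ℝ 1 u) (i : Fin 3) : Continuous (pd3 u i) :=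
  (hu.continuous_fderiv one_ne_zero).clm_apply continuous_const

lemma HasCompactSupport.pd3 (hu : HasCompactSupport u) (i : Fin 3) :
    HasCompactSupport (pd3 u i) :=
  hu.fderiv_apply ℝ (Pi.single i 1)

lemma contDiff_pd3 (hu : ContDiff ℝ 2 u) (i : Fin 3) : ContDiff ℝ 1 (pd3 u i) :=
  (hu.fderiv_right (by norm_num)).clm_apply contDiff_const

lemma continuous_divEgrad (E : Matrix (Fin 3) (Fin 3) ℝ) (hu : ContDiff ℝ 2 u) :
    Continuous (divEgrad E u) := by
  unfold divEgrad
  exact continuous_finsetSum _ fun i _ => continuous_finsetSum _ fun j _ =>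
    continuous_const.mul (continuous_pd3 (contDiff_pd3 hu j) i)

lemma integrable_mul_divEgrad (E : Matrix (Fin 3) (Fin 3) ℝ) {φ : (Fin 3 → ℝ) → ℝ}
    (hφ : Continuous φ) (hφc : HasCompactSupport φ) (hu : ContDiff ℝ 2 u) :
    Integrable fun x => φ x * divEgrad E u x :=
  (hφ.mul (continuous_divEgrad E hu)).integrable_of_hasCompactSupport hφc.mul_right

end Regularity

lemma integral_mul_pd3_eq_neg {u w : (Fin 3 → ℝ) → ℝ} (hu : ContDiff ℝ 1 u)
    (huc : HasCompactSupport u) (hw : ContDiff ℝ 1 w) (i : Fin 3) :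
    ∫ x, u x * pd3 w i x = -∫ x, pd3 u i x * w x :=
  integral_mul_fderiv_eq_neg_fderiv_mul_of_integrable
    (((continuous_pd3 hu i).mul hw.continuous).integrable_of_hasCompactSupport
      (huc.pd3 i).mul_right)
    ((hu.continuous.mul (continuous_pd3 hw i)).integrable_of_hasCompactSupport huc.mul_right)
    ((hu.continuous.mul hw.continuous).integrable_of_hasCompactSupport huc.mul_right)
    (fun x _ => hu.differentiable one_ne_zero x) (fun x _ => hw.differentiable one_ne_zero x)

lemma dotProduct_mulVec_grad3 (E : Matrix (Fin 3) (Fin 3) ℝ) (u v : (Fin 3 → ℝ) → ℝ)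
    (x : Fin 3 → ℝ) :
    grad3 u x ⬝ᵥ E *ᵥ grad3 v x = ∑ i, ∑ j, E i j * (pd3 u i x * pd3 v j x) := by
  simp only [dotProduct, mulVec, grad3, Finset.mul_sum]
  exact Finset.sum_congr rfl fun i _ => Finset.sum_congr rfl fun j _ => by ring

lemma integral_mul_divEgrad (E : Matrix (Fin 3) (Fin 3) ℝ) {φ ψ : (Fin 3 → ℝ) → ℝ}
    (hφ : ContDiff ℝ 1 φ) (hφc : HasCompactSupport φ) (hψ : ContDiff ℝ 2 ψ) :
    ∫ x, φ x * divEgrad E ψ x = -∫ x, grad3 φ x ⬝ᵥ E *ᵥ grad3 ψ x := by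
  have hsecond : ∀ i j, Integrable fun x => E i j * (φ x * pd3 (pd3 ψ j) i x) := fun i j =>
    ((hφ.continuous.mul (continuous_pd3 (contDiff_pd3 hψ j) i)).integrable_of_hasCompactSupport
      hφc.mul_right).const_mul _
  have hfirst : ∀ i j, Integrable fun x => E i j * (pd3 φ i x * pd3 ψ j x) := fun i j =>
    (((continuous_pd3 hφ i).mul (contDiff_pd3 hψ j).continuous).integrable_of_hasCompactSupport
      (hφc.pd3 i).mul_right).const_mul _
  simp_rw [dotProduct_mulVec_grad3, divEgrad, Finset.mul_sum, ← mul_assoc, mul_comm (φ _),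
    mul_assoc]
  rw [integral_finsetSum _ fun i _ => integrable_finsetSum _ fun j _ => hsecond i j,
    integral_finsetSum _ fun i _ => integrable_finsetSum _ fun j _ => hfirst i j,
    ← Finset.sum_neg_distrib]
  refine Finset.sum_congr rfl fun i _ => ?_
  rw [integral_finsetSum _ fun j _ => hsecond i j,
    integral_finsetSum _ fun j _ => hfirst i j, ← Finset.sum_neg_distrib]
  refine Finset.sum_congr rfl fun j _ => ?_
  rw [integral_const_mul, integral_const_mul,
    integral_mul_pd3_eq_neg hφ hφc (contDiff_pd3 hψ j) i, mul_neg]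

lemma mul_integral_sum_sq_pd3_le {E : Matrix (Fin 3) (Fin 3) ℝ} {Emin : ℝ}
    (hE : ∀ X : Fin 3 → ℝ, Emin * ∑ i, X i ^ 2 ≤ X ⬝ᵥ E *ᵥ X) {φ : (Fin 3 → ℝ) → ℝ}
    (hφ : ContDiff ℝ 1 φ) (hφc : HasCompactSupport φ) :
    Emin * (∫ x, ∑ i, pd3 φ i x ^ 2) ≤ ∫ x, grad3 φ x ⬝ᵥ E *ᵥ grad3 φ x := by
  have hsq : Integrable fun x => ∑ i, pd3 φ i x ^ 2 := by
    simp_rw [sq]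
    exact integrable_finsetSum _ fun i _ => ((continuous_pd3 hφ i).mul
      (continuous_pd3 hφ i)).integrable_of_hasCompactSupport (hφc.pd3 i).mul_right
  have hform : Integrable fun x => grad3 φ x ⬝ᵥ E *ᵥ grad3 φ x := by
    simp_rw [dotProduct_mulVec_grad3]
    exact integrable_finsetSum _ fun i _ => integrable_finsetSum _ fun j _ =>
      (((continuous_pd3 hφ i).mul (continuous_pd3 hφ j)).integrable_of_hasCompactSupport
        (hφc.pd3 i).mul_right).const_mul _
  rw [← integral_const_mul]
  exact integral_mono (hsq.const_mul _) hform fun x => hE (grad3 φ x)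

lemma neg_biphase_source_le {α β ε t c Dt Dc f : ℝ}
    (ht : -Dt + α ^ 2 / ε ^ 2 * (t - c) = -(α ^ 2 / ε ^ 2) * f)
    (hc : -Dc - β ^ 2 / ε ^ 2 * (t - c) = β ^ 2 / ε ^ 2 * f) :
    -(β ^ 2 * (t * Dt) + α ^ 2 * (c * Dc)) ≤ α ^ 2 * β ^ 2 / ε ^ 2 * f ^ 2 := by
  have hDt : Dt = α ^ 2 / ε ^ 2 * (t - c + f) := by linarith
  have hDc : Dc = -(β ^ 2 / ε ^ 2 * (t - c + f)) := by linarith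
  have hcombine : -(β ^ 2 * (t * Dt) + α ^ 2 * (c * Dc)) =
      α ^ 2 * β ^ 2 / ε ^ 2 * (-((t - c) * (t - c + f))) := by
    rw [hDt, hDc]; ring
  rw [hcombine]
  gcongr
  nlinarith [sq_nonneg (2 * (t - c) + f), sq_nonneg f]

theorem stmt3_general (E : Matrix (Fin 3) (Fin 3) ℝ) (Emin : ℝ)
    (hE : ∀ X : Fin 3 → ℝ, Emin * ∑ i, X i ^ 2 ≤ X ⬝ᵥ E.mulVec X)
    (α β ε : ℝ)
    (f : (Fin 3 → ℝ) → ℝ) (hf2 : MemLp f 2 volume)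
    (φt φc : (Fin 3 → ℝ) → ℝ)
    (hφt : ContDiff ℝ 2 φt) (hφtc : HasCompactSupport φt)
    (hφc : ContDiff ℝ 2 φc) (hφcc : HasCompactSupport φc)
    (heqt : ∀ x, -divEgrad E φt x + α ^ 2 / ε ^ 2 * (φt x - φc x) = -(α ^ 2 / ε ^ 2) * f x)
    (heqc : ∀ x, -divEgrad E φc x - β ^ 2 / ε ^ 2 * (φt x - φc x) = β ^ 2 / ε ^ 2 * f x) :
    β ^ 2 * Emin * (∫ x, ∑ i, (pd3 φt i x) ^ 2) +
      α ^ 2 * Emin * (∫ x, ∑ i, (pd3 φc i x) ^ 2) ≤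
      α ^ 2 * β ^ 2 / ε ^ 2 * ∫ x, (f x) ^ 2 := by
  have hφt_div := integrable_mul_divEgrad E hφt.continuous hφtc hφt
  have hφc_div := integrable_mul_divEgrad E hφc.continuous hφcc hφc
  calc β ^ 2 * Emin * (∫ x, ∑ i, (pd3 φt i x) ^ 2) +
        α ^ 2 * Emin * (∫ x, ∑ i, (pd3 φc i x) ^ 2)
      ≤ β ^ 2 * (∫ x, grad3 φt x ⬝ᵥ E *ᵥ grad3 φt x) +
          α ^ 2 * ∫ x, grad3 φc x ⬝ᵥ E *ᵥ grad3 φc x := by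
        rw [mul_assoc, mul_assoc]
        gcongr
        · exact mul_integral_sum_sq_pd3_le hE (hφt.of_le one_le_two) hφtc
        · exact mul_integral_sum_sq_pd3_le hE (hφc.of_le one_le_two) hφcc
    _ = ∫ x, -(β ^ 2 * (φt x * divEgrad E φt x) + α ^ 2 * (φc x * divEgrad E φc x)) := by
        rw [integral_neg, integral_add (hφt_div.const_mul _)
          (hφc_div.const_mul _), integral_const_mul, integral_const_mul,
          integral_mul_divEgrad E (hφt.of_le one_le_two) hφtc hφt,
          integral_mul_divEgrad E (hφc.of_le one_le_two) hφcc hφc]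
        ring
    _ ≤ ∫ x, α ^ 2 * β ^ 2 / ε ^ 2 * f x ^ 2 :=
        integral_mono ((hφt_div.const_mul _).add (hφc_div.const_mul _)).neg
          (hf2.integrable_sq.const_mul _) fun x => neg_biphase_source_le (heqt x) (heqc x)
    _ = α ^ 2 * β ^ 2 / ε ^ 2 * ∫ x, f x ^ 2 := integral_const_mul _ _

theorem stmt3 (E : Matrix (Fin 3) (Fin 3) ℝ) (Emin : ℝ) (hEmin : 0 < Emin)
    (hE : ∀ X : Fin 3 → ℝ, Emin * ∑ i, X i ^ 2 ≤ X ⬝ᵥ E.mulVec X)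
    (α β ε : ℝ) (hα : 0 < α) (hβ : 0 < β) (hε : 0 < ε)
    (f : (Fin 3 → ℝ) → ℝ) (hfc : Continuous f) (hf2 : MemLp f 2 volume)
    (φt φc : (Fin 3 → ℝ) → ℝ)
    (hφt : ContDiff ℝ 2 φt) (hφtc : HasCompactSupport φt)
    (hφc : ContDiff ℝ 2 φc) (hφcc : HasCompactSupport φc)
    (heqt : ∀ x, -divEgrad E φt x + α ^ 2 / ε ^ 2 * (φt x - φc x) = -(α ^ 2 / ε ^ 2) * f x)
    (heqc : ∀ x, -divEgrad E φc x - β ^ 2 / ε ^ 2 * (φt x - φc x) = β ^ 2 / ε ^ 2 * f x) :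
    β ^ 2 * Emin * (∫ x, ∑ i, (pd3 φt i x) ^ 2) +
      α ^ 2 * Emin * (∫ x, ∑ i, (pd3 φc i x) ^ 2) ≤
      α ^ 2 * β ^ 2 / ε ^ 2 * ∫ x, (f x) ^ 2 :=
  stmt3_general E Emin hE α β ε f hf2 φt φc hφt hφtc hφc hφcc heqt heqc
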